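/- arXiv:1610.05755 — 5 statements merged into one kernel-verified Lean document; each statement's English description precedes it below -/
import Mathlib

section
/- Let n be a vector of label counts with n_{j*} ≥ n_j for all j. If M adds independent Laplace(1/γ) noise to each coordinate and outputs the argmax, then Pr[M(d) ≠ j*] ≤ Σ_{j ≠ j*} (2 + γ(n_{j*} − n_j)) / (4 exp(γ(n_{j*} − n_j))). -/
/-! By the union bound it suffices to show that for independent Laplace variables `X`, `Y` with
density `f(x) = γ/2 · e^{-γ|x|}` and `Δ ≥ 0`, `P(X + Δ ≤ Y) = (2 + γΔ) / (4 e^{γΔ})`.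
Conditioning on `X`, this probability is `∫ f(x) T(x + Δ) dx`, where the tail `T(s) = P(Y ≥ s)`
is `e^{-γs}/2` for `s ≥ 0` and `1 - e^{γs}/2` for `s ≤ 0`. Splitting the line at `-Δ` and `0`
makes every piece an exponential integral; they contribute `3/8`, `γΔ/4` and `1/8` times
`e^{-γΔ}`. -/

open MeasureTheory ProbabilityTheory Real Finset Set

lemma ProbabilityTheory.IndepFun.measure_add_le_eq_lintegral {Ω : Type*} [MeasurableSpace Ω]
    {P : Measure Ω} [IsFiniteMeasure P] {X Y : Ω → ℝ} (hXY : IndepFun X Y P)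
    (hX : Measurable X) (hY : Measurable Y) (Δ : ℝ) :
    P {ω | X ω + Δ ≤ Y ω} = ∫⁻ x, P.map Y (Ici (x + Δ)) ∂P.map X := by
  have hS : MeasurableSet {p : ℝ × ℝ | p.1 + Δ ≤ p.2} :=
    measurableSet_le (by fun_prop) (by fun_prop)
  calc P {ω | X ω + Δ ≤ Y ω} = (P.map X).prod (P.map Y) {p : ℝ × ℝ | p.1 + Δ ≤ p.2} := by
        rw [← hXY.map_prod_eq_prod_map_map hX.aemeasurable hY.aemeasurable,
          Measure.map_apply (hX.prodMk hY) hS]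
        rfl
    _ = _ := Measure.prod_apply hS

noncomputable def laplacePDF (γ x : ℝ) : ℝ := γ / 2 * exp (-γ * |x|)

noncomputable def laplaceMeasure (γ : ℝ) : Measure ℝ :=
  volume.withDensity fun x => ENNReal.ofReal (laplacePDF γ x)

noncomputable def laplaceTail (γ s : ℝ) : ℝ :=
  if 0 ≤ s then exp (-(γ * s)) / 2 else 1 - exp (γ * s) / 2

section Laplace

variable {γ : ℝ}

lemma laplacePDF_nonneg (hγ : 0 ≤ γ) (x : ℝ) : 0 ≤ laplacePDF γ x := by
  unfold laplacePDF; positivity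

lemma laplacePDF_of_nonneg {x : ℝ} (hx : 0 ≤ x) : laplacePDF γ x = γ / 2 * exp (-γ * x) := by
  rw [laplacePDF, abs_of_nonneg hx]

lemma laplacePDF_of_nonpos {x : ℝ} (hx : x ≤ 0) : laplacePDF γ x = γ / 2 * exp (γ * x) := by
  rw [laplacePDF, abs_of_nonpos hx, neg_mul_neg]

lemma integrableOn_laplacePDF_Iic (hγ : 0 < γ) {s : ℝ} (hs : s ≤ 0) :
    IntegrableOn (laplacePDF γ) (Iic s) :=
  IntegrableOn.congr_fun ((integrableOn_exp_mul_Iic hγ s).const_mul (γ / 2))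
    (fun _ hx => (laplacePDF_of_nonpos (le_trans hx hs)).symm) measurableSet_Iic

lemma integrableOn_laplacePDF_Ioi (hγ : 0 < γ) {s : ℝ} (hs : 0 ≤ s) :
    IntegrableOn (laplacePDF γ) (Ioi s) :=
  IntegrableOn.congr_fun ((integrableOn_exp_mul_Ioi (neg_neg_of_pos hγ) s).const_mul (γ / 2))
    (fun _ hx => (laplacePDF_of_nonneg (hs.trans (hx.le))).symm) measurableSet_Ioi

lemma integrable_laplacePDF (hγ : 0 < γ) : Integrable (laplacePDF γ) := by
  rw [← integrableOn_univ, ← Iic_union_Ioi (a := (0 : ℝ))]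
  exact (integrableOn_laplacePDF_Iic hγ le_rfl).union (integrableOn_laplacePDF_Ioi hγ le_rfl)

lemma setIntegral_laplacePDF_Iic (hγ : 0 < γ) {s : ℝ} (hs : s ≤ 0) :
    ∫ x in Iic s, laplacePDF γ x = exp (γ * s) / 2 := by
  rw [setIntegral_congr_fun measurableSet_Iic fun _ hx => laplacePDF_of_nonpos (le_trans hx hs),
    integral_const_mul, integral_exp_mul_Iic hγ]
  field_simp

lemma setIntegral_laplacePDF_Ioi (hγ : 0 < γ) {s : ℝ} (hs : 0 ≤ s) :
    ∫ x in Ioi s, laplacePDF γ x = exp (-(γ * s)) / 2 := by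
  rw [setIntegral_congr_fun measurableSet_Ioi
      fun _ hx => laplacePDF_of_nonneg (hs.trans (hx.le)),
    integral_const_mul, integral_exp_mul_Ioi (neg_neg_of_pos hγ), neg_mul]
  field_simp

lemma integral_laplacePDF (hγ : 0 < γ) : ∫ x, laplacePDF γ x = 1 := by
  rw [← integral_add_compl measurableSet_Iic (integrable_laplacePDF hγ), compl_Iic,
    setIntegral_laplacePDF_Iic hγ le_rfl, setIntegral_laplacePDF_Ioi hγ le_rfl]
  norm_num

lemma setIntegral_laplacePDF_Ici (hγ : 0 < γ) (s : ℝ) :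
    ∫ x in Ici s, laplacePDF γ x = laplaceTail γ s := by
  rw [laplaceTail]
  split_ifs with hs
  · rw [integral_Ici_eq_integral_Ioi, setIntegral_laplacePDF_Ioi hγ hs]
  · have h := integral_add_compl (measurableSet_Ici (a := s)) (integrable_laplacePDF hγ)
    rw [compl_Ici, ← integral_Iic_eq_integral_Iio, setIntegral_laplacePDF_Iic hγ (not_le.1 hs).le,
      integral_laplacePDF hγ] at h
    linarith

lemma laplaceTail_of_nonneg {s : ℝ} (hs : 0 ≤ s) : laplaceTail γ s = exp (-(γ * s)) / 2 :=
  if_pos hs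

lemma laplaceTail_of_nonpos {s : ℝ} (hs : s ≤ 0) : laplaceTail γ s = 1 - exp (γ * s) / 2 := by
  rcases hs.lt_or_eq with hs | rfl
  · exact if_neg (not_le.2 hs)
  · norm_num [laplaceTail]

lemma measurable_laplaceTail (γ : ℝ) : Measurable (laplaceTail γ) :=
  Measurable.ite measurableSet_Ici (by fun_prop) (by fun_prop)

lemma laplaceTail_nonneg (hγ : 0 < γ) (s : ℝ) : 0 ≤ laplaceTail γ s := by
  rw [← setIntegral_laplacePDF_Ici hγ]
  exact setIntegral_nonneg measurableSet_Ici fun x _ => laplacePDF_nonneg hγ.le x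

lemma laplaceTail_le_one (hγ : 0 < γ) (s : ℝ) : laplaceTail γ s ≤ 1 := by
  rw [← setIntegral_laplacePDF_Ici hγ, ← integral_laplacePDF hγ]
  exact setIntegral_le_integral (integrable_laplacePDF hγ)
    (Filter.Eventually.of_forall (laplacePDF_nonneg hγ.le))

lemma laplaceMeasure_Ici (hγ : 0 < γ) (s : ℝ) :
    laplaceMeasure γ (Ici s) = ENNReal.ofReal (laplaceTail γ s) := by
  rw [laplaceMeasure, withDensity_apply _ measurableSet_Ici, ← setIntegral_laplacePDF_Ici hγ,
    ofReal_integral_eq_lintegral_ofReal (integrable_laplacePDF hγ).integrableOn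
      (ae_of_all _ (laplacePDF_nonneg hγ.le))]

lemma integrable_laplacePDF_mul_laplaceTail (hγ : 0 < γ) (Δ : ℝ) :
    Integrable fun x => laplacePDF γ x * laplaceTail γ (x + Δ) :=
  (integrable_laplacePDF hγ).mul_bdd (c := 1)
    ((measurable_laplaceTail γ).comp (measurable_add_const Δ)).aestronglyMeasurable <|
    ae_of_all _ fun _ => (Real.norm_of_nonneg (laplaceTail_nonneg hγ _)).trans_le
      (laplaceTail_le_one hγ _)

variable {Δ : ℝ}

lemma setIntegral_Iic_laplacePDF_mul_laplaceTail (hγ : 0 < γ) (hΔ : 0 ≤ Δ) :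
    ∫ x in Iic (-Δ), laplacePDF γ x * laplaceTail γ (x + Δ) = 3 / 8 * exp (-(γ * Δ)) := by
  have h2γ : 0 < 2 * γ := by positivity
  rw [setIntegral_congr_fun measurableSet_Iic (g := fun x =>
      γ / 2 * exp (γ * x) - γ / 4 * exp (γ * Δ) * exp (2 * γ * x)) fun x hx => by
    simp only [laplacePDF_of_nonpos (le_trans hx (neg_nonpos.2 hΔ)),
      laplaceTail_of_nonpos (show x + Δ ≤ 0 by linarith [mem_Iic.1 hx])]
    have h : exp (γ * x) * exp (γ * (x + Δ)) = exp (γ * Δ) * exp (2 * γ * x) := by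
      rw [← exp_add, ← exp_add]; ring_nf
    linear_combination (-γ / 4) * h]
  rw [integral_sub ((integrableOn_exp_mul_Iic hγ _).const_mul _)
      ((integrableOn_exp_mul_Iic h2γ _).const_mul _),
    integral_const_mul, integral_const_mul, integral_exp_mul_Iic hγ, integral_exp_mul_Iic h2γ]
  have h : exp (γ * Δ) * exp (2 * γ * -Δ) = exp (γ * -Δ) := by rw [← exp_add]; ring_nf
  rw [mul_assoc (γ / 4), ← mul_div_assoc (exp (γ * Δ)), h, mul_neg]
  field_simp
  ring

lemma setIntegral_Ioc_laplacePDF_mul_laplaceTail (hΔ : 0 ≤ Δ) :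
    ∫ x in Ioc (-Δ) 0, laplacePDF γ x * laplaceTail γ (x + Δ) = γ * Δ / 4 * exp (-(γ * Δ)) := by
  rw [setIntegral_congr_fun measurableSet_Ioc (g := fun _ => γ / 4 * exp (-(γ * Δ)))
    fun x hx => by
      simp only [laplacePDF_of_nonpos hx.2,
        laplaceTail_of_nonneg (show 0 ≤ x + Δ by linarith [hx.1])]
      have h : exp (γ * x) * exp (-(γ * (x + Δ))) = exp (-(γ * Δ)) := by
        rw [← exp_add]; ring_nf
      linear_combination (γ / 4) * h]
  rw [setIntegral_const, measureReal_def, Real.volume_Ioc, ENNReal.toReal_ofReal (by linarith),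
    smul_eq_mul]
  ring

lemma setIntegral_Ioi_laplacePDF_mul_laplaceTail (hγ : 0 < γ) (hΔ : 0 ≤ Δ) :
    ∫ x in Ioi 0, laplacePDF γ x * laplaceTail γ (x + Δ) = exp (-(γ * Δ)) / 8 := by
  rw [setIntegral_congr_fun measurableSet_Ioi
      (g := fun x => γ / 4 * exp (-(γ * Δ)) * exp (-(2 * γ) * x)) fun x hx => by
    simp only [laplacePDF_of_nonneg (hx.le),
      laplaceTail_of_nonneg (show 0 ≤ x + Δ by linarith [mem_Ioi.1 hx])]
    have h : exp (-γ * x) * exp (-(γ * (x + Δ))) = exp (-(γ * Δ)) * exp (-(2 * γ) * x) := by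
      rw [← exp_add, ← exp_add]; ring_nf
    linear_combination (γ / 4) * h]
  rw [integral_const_mul, integral_exp_mul_Ioi (by linarith), mul_zero, exp_zero]
  field_simp
  norm_num

lemma integral_laplacePDF_mul_laplaceTail (hγ : 0 < γ) (hΔ : 0 ≤ Δ) :
    ∫ x, laplacePDF γ x * laplaceTail γ (x + Δ) = (2 + γ * Δ) / (4 * exp (γ * Δ)) := by
  have hg := integrable_laplacePDF_mul_laplaceTail hγ Δ
  rw [← integral_add_compl measurableSet_Iic hg, compl_Iic,
    ← Iic_union_Ioc_eq_Iic (neg_nonpos.2 hΔ),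
    setIntegral_union (Iic_disjoint_Ioc le_rfl) measurableSet_Ioc hg.integrableOn hg.integrableOn,
    setIntegral_Iic_laplacePDF_mul_laplaceTail hγ hΔ, setIntegral_Ioc_laplacePDF_mul_laplaceTail hΔ,
    setIntegral_Ioi_laplacePDF_mul_laplaceTail hγ hΔ, exp_neg]
  field_simp
  ring

lemma lintegral_laplaceMeasure_Ici_add (hγ : 0 < γ) (hΔ : 0 ≤ Δ) :
    ∫⁻ x, laplaceMeasure γ (Ici (x + Δ)) ∂laplaceMeasure γ =
      ENNReal.ofReal ((2 + γ * Δ) / (4 * exp (γ * Δ))) := by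
  have hTail : Measurable fun x => ENNReal.ofReal (laplaceTail γ (x + Δ)) :=
    ((measurable_laplaceTail γ).comp (measurable_add_const Δ)).ennreal_ofReal
  simp_rw [laplaceMeasure_Ici hγ]
  rw [laplaceMeasure,
    lintegral_withDensity_eq_lintegral_mul _ (by unfold laplacePDF; fun_prop) hTail]
  simp_rw [Pi.mul_apply, ← ENNReal.ofReal_mul (laplacePDF_nonneg hγ.le _)]
  rw [← ofReal_integral_eq_lintegral_ofReal (integrable_laplacePDF_mul_laplaceTail hγ Δ)
      (ae_of_all _ fun x => mul_nonneg (laplacePDF_nonneg hγ.le x) (laplaceTail_nonneg hγ _)),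
    integral_laplacePDF_mul_laplaceTail hγ hΔ]

end Laplace

/-- Noisy-max mechanism: if `j*` has the largest count, the probability that some other
class beats `j*` after adding independent Laplace(1/γ) noise to each count is at most
`∑_{j ≠ j*} (2 + γ(n_{j*} - n_j)) / (4 exp(γ(n_{j*} - n_j)))`. -/
theorem noisy_max_error_bound
    {Ω : Type*} [MeasureSpace Ω] [IsProbabilityMeasure (ℙ : Measure Ω)]
    {m : ℕ} (γ : ℝ) (hγ : 0 < γ) (n : Fin m → ℤ) (jstar : Fin m)
    (hmax : ∀ j, n j ≤ n jstar)
    (L : Fin m → Ω → ℝ) (hLmeas : ∀ j, Measurable (L j))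
    (hindep : iIndepFun L ℙ)
    (hpdf : ∀ j, Measure.map (L j) ℙ =
      volume.withDensity (fun x => ENNReal.ofReal (γ / 2 * Real.exp (-γ * |x|)))) :
    ℙ {ω | ∃ j, j ≠ jstar ∧ (n jstar : ℝ) + L jstar ω ≤ (n j : ℝ) + L j ω} ≤
      ENNReal.ofReal (∑ j ∈ Finset.univ.filter (· ≠ jstar),
        (2 + γ * ((n jstar : ℝ) - (n j : ℝ))) /
          (4 * Real.exp (γ * ((n jstar : ℝ) - (n j : ℝ))))) := by
  have hgap (j : Fin m) : (0 : ℝ) ≤ n jstar - n j := sub_nonneg.2 (mod_cast hmax j)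
  have hpair (j : Fin m) (hj : j ≠ jstar) :
      ℙ {ω | L jstar ω + (n jstar - n j) ≤ L j ω} =
        ENNReal.ofReal ((2 + γ * (n jstar - n j)) / (4 * exp (γ * (n jstar - n j)))) := by
    rw [(hindep.indepFun hj.symm).measure_add_le_eq_lintegral (hLmeas jstar) (hLmeas j),
      hpdf, hpdf]
    exact lintegral_laplaceMeasure_Ici_add hγ (hgap j)
  calc ℙ {ω | ∃ j, j ≠ jstar ∧ (n jstar : ℝ) + L jstar ω ≤ (n j : ℝ) + L j ω}
      = ℙ (⋃ j ∈ univ.filter (· ≠ jstar), {ω | L jstar ω + (n jstar - n j) ≤ L j ω}) := by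
        congr 1
        ext ω
        simp only [mem_ofPred_eq, mem_iUnion, Finset.mem_filter, Finset.mem_univ, true_and,
          exists_prop]
        refine exists_congr fun j => and_congr_right fun _ => ?_
        constructor <;> intro h <;> linarith
    _ ≤ ∑ j ∈ univ.filter (· ≠ jstar), ℙ {ω | L jstar ω + (n jstar - n j) ≤ L j ω} :=
        measure_biUnion_finset_le _ _
    _ = _ := by
        rw [ENNReal.ofReal_sum_of_nonneg fun j _ =>
          div_nonneg (add_nonneg zero_le_two (mul_nonneg hγ.le (hgap j))) (by positivity)]
        exact sum_congr rfl fun j hj => hpair j (mem_filter.1 hj).2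
end

section
/- For fixed γ > 0 and l ≥ 0, the function f(z) = (1−z)((1−z)/(1−e^{2γ}z))^l + z e^{2γl} is non-decreasing on the interval (0, (e^{2γ}−1)/(e^{4γ}−1)). -/
open Real Set

/-!
Write `a = e^{2γ}` and `r = (1 - z)/(1 - a z)`, so that `f(z) = (1 - z) r^l + z a^l` and the right
end of the interval lies below `1/a`. Since `(1 - z) r' = r (a r - 1)`,
`f'(z) = a^l - r^l (1 - l (a r - 1))`, and this is nonnegative because
`(a/r)^l ≥ 1 + l log (a/r) ≥ 1 + l (1 - r/a) ≥ 1 - l (a r - 1)` for `a ≥ 1`.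
-/

lemma rpow_mul_one_add_mul_log_div_le {x y : ℝ} (hx : 0 < x) (hy : 0 < y) (l : ℝ) :
    y ^ l * (1 + l * log (x / y)) ≤ x ^ l :=
  calc y ^ l * (1 + l * log (x / y))
      ≤ y ^ l * exp (log (x / y) * l) := by
        gcongr
        linarith [add_one_le_exp (log (x / y) * l)]
    _ = x ^ l := by
        rw [← rpow_def_of_pos (div_pos hx hy), div_rpow hx.le hy.le,
          mul_div_cancel₀ _ (rpow_pos_of_pos hy l).ne']

lemma one_sub_mul_le_log_div {a r : ℝ} (ha : 1 ≤ a) (hr : 0 < r) : 1 - a * r ≤ log (a / r) := by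
  have hlog := one_sub_inv_le_log_of_pos (div_pos (zero_lt_one.trans_le ha) hr)
  rw [inv_div] at hlog
  linarith [div_le_self hr.le ha, le_mul_of_one_le_left hr.le ha]

lemma rpow_mul_one_sub_mul_le_rpow {a r l : ℝ} (ha : 1 ≤ a) (hr : 0 < r) (hl : 0 ≤ l) :
    r ^ l * (1 - l * (a * r - 1)) ≤ a ^ l := by
  refine le_trans ?_ (rpow_mul_one_add_mul_log_div_le (zero_lt_one.trans_le ha) hr l)
  gcongr
  nlinarith [mul_le_mul_of_nonneg_left (one_sub_mul_le_log_div ha hr) hl]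

lemma hasDerivAt_one_sub_mul_rpow_add_mul_rpow {a l z : ℝ} (hz : 0 < 1 - z) (haz : 0 < 1 - a * z) :
    HasDerivAt (fun z : ℝ => (1 - z) * ((1 - z) / (1 - a * z)) ^ l + z * a ^ l)
      (a ^ l - ((1 - z) / (1 - a * z)) ^ l *
        (1 - l * (a * ((1 - z) / (1 - a * z)) - 1))) z := by
  have hr : 0 < (1 - z) / (1 - a * z) := div_pos hz haz
  have hquot : HasDerivAt (fun z : ℝ => (1 - z) / (1 - a * z))
      ((1 - z) / (1 - a * z) * (a * ((1 - z) / (1 - a * z)) - 1) / (1 - z)) z := by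
    refine (((hasDerivAt_id' z).const_sub 1).div ((hasDerivAt_id' z).const_mul a |>.const_sub 1)
      haz.ne').congr_deriv ?_
    field_simp
    ring
  refine (((hasDerivAt_id' z).const_sub 1).mul (hquot.rpow_const (p := l) (Or.inl hr.ne')) |>.add
    ((hasDerivAt_id' z).mul_const (a ^ l))).congr_deriv ?_
  generalize (1 - z) / (1 - a * z) = r at hr ⊢
  rw [rpow_sub_one hr.ne']
  field_simp
  ring

lemma monotoneOn_one_sub_mul_rpow_add_mul_rpow {a l : ℝ} (ha : 1 ≤ a) (hl : 0 ≤ l) :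
    MonotoneOn (fun z : ℝ => (1 - z) * ((1 - z) / (1 - a * z)) ^ l + z * a ^ l) (Iio a⁻¹) := by
  have hpos : ∀ z ∈ Iio a⁻¹, 0 < 1 - z ∧ 0 < 1 - a * z := by
    intro z hz
    have ha0 : 0 < a := zero_lt_one.trans_le ha
    have haz : a * z < 1 := by
      simpa [mul_inv_cancel₀ ha0.ne'] using mul_lt_mul_of_pos_left (mem_Iio.1 hz) ha0
    constructor <;> nlinarith
  have hderiv := fun z hz =>
    hasDerivAt_one_sub_mul_rpow_add_mul_rpow (l := l) (hpos z hz).1 (hpos z hz).2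
  refine monotoneOn_of_hasDerivWithinAt_nonneg (convex_Iio _)
    (fun z hz => (hderiv z hz).continuousAt.continuousWithinAt)
    (fun z hz => (hderiv z (interior_subset hz)).hasDerivWithinAt) fun z hz => ?_
  obtain ⟨hz, haz⟩ := hpos z (interior_subset hz)
  exact sub_nonneg.2 (rpow_mul_one_sub_mul_le_rpow ha (div_pos hz haz) hl)

/-- For fixed `γ > 0` and `l ≥ 0`, the function
`f(z) = (1-z)((1-z)/(1-e^{2γ}z))^l + z e^{2γl}` is non-decreasing on
`(0, (e^{2γ}-1)/(e^{4γ}-1))`. -/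
theorem f_monotone
    (γ l : ℝ) (hγ : 0 < γ) (hl : 0 ≤ l) :
    MonotoneOn
      (fun z : ℝ => (1 - z) * ((1 - z) / (1 - Real.exp (2 * γ) * z)) ^ l +
        z * Real.exp (2 * γ * l))
      (Set.Ioo 0 ((Real.exp (2 * γ) - 1) / (Real.exp (4 * γ) - 1))) := by
  set a := exp (2 * γ)
  have ha : 1 < a := one_lt_exp_iff.2 (by positivity)
  have hend : (a - 1) / (exp (4 * γ) - 1) ≤ a⁻¹ := by
    rw [show 4 * γ = 2 * γ + 2 * γ by ring, exp_add, div_le_iff₀ (by nlinarith)]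
    have : a⁻¹ * (a * a - 1) = a - a⁻¹ := by field_simp
    linarith [inv_le_one_of_one_le₀ ha.le]
  rw [exp_mul (2 * γ) l]
  exact (monotoneOn_one_sub_mul_rpow_add_mul_rpow ha.le hl).mono
    (Ioo_subset_Iio_self.trans (Iio_subset_Iio hend))
end

section
/- For fixed γ > 0, l ≥ 0, and z in (0, (e^{2γ}−1)/(e^{4γ}−1)), the function g(z,w) = (1−z)((1−w)/(1−e^{2γ}w))^l + z e^{2γl} is non-decreasing in w on the same interval, and non-decreasing in z. -/
open Real Set

/-! With `E = e^{2γ} > 1` the interval is `(0, 1/(E+1))`. On it the Möbius ratio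
`r(w) = (1-w)/(1-Ew)` is increasing, with `r(0) = 1` and `r(1/(E+1)) = E`; hence `r^l` is
increasing in `w`, and `g = r^l + z (E^l - r^l)` is affine in `z` with slope `E^l - r^l ≥ 0`. -/

lemma sub_one_div_sq_sub_one {E : ℝ} (hE : E ≠ 1) : (E - 1) / (E ^ 2 - 1) = (E + 1)⁻¹ := by
  rw [show E ^ 2 - 1 = (E - 1) * (E + 1) by ring, div_mul_cancel_left₀ (sub_ne_zero.2 hE)]

section MobiusRatio

variable {E : ℝ}

lemma mul_add_one_lt_one_of_lt_inv (hE : -1 < E) {w : ℝ} (hw : w < (E + 1)⁻¹) :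
    w * (E + 1) < 1 := by
  rwa [← lt_div_iff₀ (by linarith), one_div]

lemma mul_lt_one_of_mem_Ioo_inv_add_one (hE : 0 ≤ E) {w : ℝ} (hw : w ∈ Ioo 0 (E + 1)⁻¹) :
    E * w < 1 := by
  nlinarith [hw.1, mul_add_one_lt_one_of_lt_inv (by linarith) hw.2]

lemma mobius_ratio_le_mobius_ratio (hE : 1 ≤ E) {w₁ w₂ : ℝ} (hw₂ : E * w₂ < 1)
    (hw : w₁ ≤ w₂) : (1 - w₁) / (1 - E * w₁) ≤ (1 - w₂) / (1 - E * w₂) := by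
  have hw₁ : E * w₁ < 1 := by nlinarith
  rw [div_le_div_iff₀ (by linarith) (by linarith)]
  nlinarith

lemma one_le_mobius_ratio (hE : 1 ≤ E) {w : ℝ} (hw₀ : 0 ≤ w) (hw : E * w < 1) :
    1 ≤ (1 - w) / (1 - E * w) := by
  simpa using mobius_ratio_le_mobius_ratio hE hw hw₀

lemma mobius_ratio_le (hE : 1 ≤ E) {w : ℝ} (hw : w ∈ Ioo 0 (E + 1)⁻¹) :
    (1 - w) / (1 - E * w) ≤ E := by
  have hEw := mul_lt_one_of_mem_Ioo_inv_add_one (by linarith) hw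
  have h := mul_add_one_lt_one_of_lt_inv (by linarith) hw.2
  rw [div_le_iff₀ (by linarith)]
  nlinarith

lemma monotoneOn_mobius_ratio_rpow (hE : 1 ≤ E) {l : ℝ} (hl : 0 ≤ l) :
    MonotoneOn (fun w => ((1 - w) / (1 - E * w)) ^ l) (Ioo 0 (E + 1)⁻¹) := by
  intro w₁ hw₁ w₂ hw₂ hw
  have hE₀ : 0 ≤ E := by linarith
  exact rpow_le_rpow
    (by linarith [one_le_mobius_ratio hE hw₁.1.le (mul_lt_one_of_mem_Ioo_inv_add_one hE₀ hw₁)])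
    (mobius_ratio_le_mobius_ratio hE (mul_lt_one_of_mem_Ioo_inv_add_one hE₀ hw₂) hw) hl

end MobiusRatio

lemma monotone_affine_combination {a b : ℝ} (hab : a ≤ b) :
    Monotone (fun z : ℝ => (1 - z) * a + z * b) := by
  intro z₁ z₂ hz
  nlinarith

/-- For fixed `γ > 0`, `l ≥ 0`, and `z` in `(0, (e^{2γ}-1)/(e^{4γ}-1))`, the function
`g(z,w) = (1-z)((1-w)/(1-e^{2γ}w))^l + z e^{2γl}` is non-decreasing in `w` on the
same interval, and non-decreasing in `z`. -/
theorem g_monotone_in_each_variable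
    (γ l : ℝ) (hγ : 0 < γ) (hl : 0 ≤ l) :
    (∀ z ∈ Set.Ioo (0 : ℝ) ((Real.exp (2 * γ) - 1) / (Real.exp (4 * γ) - 1)),
      MonotoneOn
        (fun w : ℝ => (1 - z) * ((1 - w) / (1 - Real.exp (2 * γ) * w)) ^ l +
          z * Real.exp (2 * γ * l))
        (Set.Ioo 0 ((Real.exp (2 * γ) - 1) / (Real.exp (4 * γ) - 1)))) ∧
    (∀ w ∈ Set.Ioo (0 : ℝ) ((Real.exp (2 * γ) - 1) / (Real.exp (4 * γ) - 1)),
      MonotoneOn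
        (fun z : ℝ => (1 - z) * ((1 - w) / (1 - Real.exp (2 * γ) * w)) ^ l +
          z * Real.exp (2 * γ * l))
        (Set.Ioo 0 ((Real.exp (2 * γ) - 1) / (Real.exp (4 * γ) - 1)))) := by
  have hE : 1 < exp (2 * γ) := one_lt_exp_iff.2 (by linarith)
  have hbound : (exp (2 * γ) - 1) / (exp (4 * γ) - 1) = (exp (2 * γ) + 1)⁻¹ := by
    rw [show exp (4 * γ) = exp (2 * γ) ^ 2 by rw [sq, ← exp_add]; ring_nf,
      sub_one_div_sq_sub_one hE.ne']
  have hpow : exp (2 * γ * l) = exp (2 * γ) ^ l := by rw [exp_mul]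
  rw [hbound, hpow]
  constructor
  · intro z hz
    have hz₁ : 0 ≤ 1 - z := by
      linarith [mul_lt_one_of_mem_Ioo_inv_add_one (by linarith) hz, mul_lt_mul_of_pos_right hE hz.1]
    intro w₁ hw₁ w₂ hw₂ hw
    exact add_le_add_left (mul_le_mul_of_nonneg_left
      (monotoneOn_mobius_ratio_rpow hE.le hl hw₁ hw₂ hw) hz₁) _
  · intro w hw
    refine (monotone_affine_combination (rpow_le_rpow ?_ (mobius_ratio_le hE.le hw) hl)).monotoneOn _
    linarith [one_le_mobius_ratio hE.le hw.1.le (mul_lt_one_of_mem_Ioo_inv_add_one (by linarith) hw)]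
end

section
/- If a mechanism M satisfies (2γ, 0)-differential privacy, then for every integer l ≥ 0 and all neighbors d, d', the log-moment of the privacy loss satisfies α(l; d, d') ≤ 2γ² l(l+1). -/
/-!
With `ε = 2γ`, the ratio `y = P/Q` takes values in `[e^{-ε}, e^ε]`, has `Q`-mean `1`, and the
moment is `E_Q[y^(l+1)]`. Since `y^(l+1)` lies below its chord over `[e^{-ε}, e^ε]`, this is at
most the same moment of the two-point law on `{e^{-ε}, e^ε}` with mean `1`, which is
`cosh((l + 1/2)ε) / cosh(ε/2)`. As `t ↦ cosh t · exp(-t²/2)` is antitone on `[0, ∞)`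
(equivalently `tanh t ≤ t`), this is at most
`exp(((l + 1/2)² - 1/4) ε²/2) = exp(2γ² l(l+1))`.
-/

open Real Set

theorem Real.sinh_le_mul_cosh {x : ℝ} (hx : 0 ≤ x) : sinh x ≤ x * cosh x := by
  have hderiv (t : ℝ) : HasDerivAt (fun t => t * cosh t - sinh t) (t * sinh t) t :=
    (((hasDerivAt_id' t).mul (hasDerivAt_cosh t)).sub (hasDerivAt_sinh t)).congr_deriv (by ring)
  have hmono : MonotoneOn (fun t => t * cosh t - sinh t) (Ici 0) := by
    refine monotoneOn_of_deriv_nonneg (convex_Ici 0)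
      (fun t _ => (hderiv t).continuousAt.continuousWithinAt)
      (fun t _ => (hderiv t).differentiableAt.differentiableWithinAt) fun t ht => ?_
    rw [interior_Ici] at ht
    rw [(hderiv t).deriv]
    exact mul_nonneg ht.out.le (sinh_nonneg_iff.2 ht.out.le)
  simpa using hmono self_mem_Ici hx hx

theorem Real.antitoneOn_cosh_mul_exp_neg_sq :
    AntitoneOn (fun t => cosh t * exp (-(t ^ 2 / 2))) (Ici 0) := by
  have hderiv (t : ℝ) : HasDerivAt (fun t => cosh t * exp (-(t ^ 2 / 2)))
      ((sinh t - t * cosh t) * exp (-(t ^ 2 / 2))) t := by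
    have hsq : HasDerivAt (fun t : ℝ => -(t ^ 2 / 2)) (-t) t :=
      ((hasDerivAt_pow 2 t).div_const 2).neg.congr_deriv (by ring)
    exact ((hasDerivAt_cosh t).mul hsq.exp).congr_deriv (by ring)
  refine antitoneOn_of_deriv_nonpos (convex_Ici 0)
    (fun t _ => (hderiv t).continuousAt.continuousWithinAt)
    (fun t _ => (hderiv t).differentiableAt.differentiableWithinAt) fun t ht => ?_
  rw [interior_Ici] at ht
  rw [(hderiv t).deriv]
  exact mul_nonpos_of_nonpos_of_nonneg (sub_nonpos.2 (sinh_le_mul_cosh ht.out.le)) (exp_nonneg _)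

theorem Real.cosh_le_cosh_mul_exp_sq_sub_sq {a b : ℝ} (ha : 0 ≤ a) (hab : a ≤ b) :
    cosh b ≤ cosh a * exp ((b ^ 2 - a ^ 2) / 2) := by
  have h := antitoneOn_cosh_mul_exp_neg_sq ha (ha.trans hab) hab
  have hsplit : (b ^ 2 - a ^ 2) / 2 = -(a ^ 2 / 2) + b ^ 2 / 2 := by ring
  rw [hsplit, exp_add, ← mul_assoc]
  calc cosh b = cosh b * exp (-(b ^ 2 / 2)) * exp (b ^ 2 / 2) := by
        rw [mul_assoc, ← exp_add, neg_add_cancel, exp_zero, mul_one]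
    _ ≤ _ := by gcongr

theorem Real.exp_chord_eq_sinh_mul_cosh (ε : ℝ) (k : ℕ) :
    (exp ε - 1) * exp (-ε) ^ (k + 1) + (1 - exp (-ε)) * exp ε ^ (k + 1) =
      4 * sinh (ε / 2) * cosh ((2 * k + 1) * (ε / 2)) := by
  have hsq : exp ε = exp (ε / 2) ^ 2 := by rw [← exp_nat_mul]; ring_nf
  have hpow : exp ε ^ (k + 1) = exp (ε / 2) * exp ((2 * k + 1) * (ε / 2)) := by
    rw [← exp_nat_mul, ← exp_add]; push_cast; ring_nf
  have hx := (exp_pos (ε / 2)).ne'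
  have hX := (exp_pos ((2 * k + 1) * (ε / 2))).ne'
  rw [exp_neg, inv_pow, hpow, sinh_eq, cosh_eq, exp_neg, exp_neg, hsq]
  field_simp
  ring

theorem Real.exp_chord_le {ε : ℝ} (hε : 0 ≤ ε) (k : ℕ) :
    (exp ε - 1) * exp (-ε) ^ (k + 1) + (1 - exp (-ε)) * exp ε ^ (k + 1) ≤
      (exp ε - exp (-ε)) * exp (ε ^ 2 * k * (k + 1) / 2) := by
  have hcosh := cosh_le_cosh_mul_exp_sq_sub_sq (a := ε / 2) (b := (2 * k + 1) * (ε / 2))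
    (by positivity)
    (le_mul_of_one_le_left (by positivity) (by linarith [k.cast_nonneg (α := ℝ)]))
  have hexp : (((2 * k + 1) * (ε / 2)) ^ 2 - (ε / 2) ^ 2) / 2 = ε ^ 2 * k * (k + 1) / 2 := by
    ring
  rw [hexp] at hcosh
  have hsinh : exp ε - exp (-ε) = 4 * sinh (ε / 2) * cosh (ε / 2) := by
    have := sinh_two_mul (ε / 2)
    rw [mul_div_cancel₀ ε two_ne_zero, sinh_eq] at this
    linarith
  calc _ = 4 * sinh (ε / 2) * cosh ((2 * k + 1) * (ε / 2)) := exp_chord_eq_sinh_mul_cosh ε k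
    _ ≤ 4 * sinh (ε / 2) * (cosh (ε / 2) * exp (ε ^ 2 * k * (k + 1) / 2)) := by
      have : 0 ≤ sinh (ε / 2) := sinh_nonneg_iff.2 (by positivity)
      gcongr
    _ = _ := by rw [hsinh]; ring

theorem ConvexOn.sub_mul_le_of_mem_Icc {𝕜 : Type*} [Field 𝕜] [LinearOrder 𝕜]
    [IsStrictOrderedRing 𝕜] {s : Set 𝕜} {f : 𝕜 → 𝕜} (hf : ConvexOn 𝕜 s f)
    {x y z : 𝕜} (hx : x ∈ s) (hz : z ∈ s) (hy : y ∈ Icc x z) :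
    (z - x) * f y ≤ (z - y) * f x + (y - x) * f z := by
  rcases hy.1.eq_or_lt with rfl | hxy
  · linarith
  rcases hy.2.eq_or_lt with rfl | hyz
  · linarith
  exact hf.secant_mono_aux1 hx hz hxy hyz

theorem mul_div_pow_le_chord {a b p q : ℝ} (ha : 0 ≤ a) (hq : 0 ≤ q) (hap : a * q ≤ p)
    (hpb : p ≤ b * q) (k : ℕ) :
    (b - a) * (p * (p / q) ^ k) ≤ (b * q - p) * a ^ (k + 1) + (p - a * q) * b ^ (k + 1) := by
  rcases hq.eq_or_lt with rfl | hq
  · obtain rfl : p = 0 := le_antisymm (by simpa using hpb) (by simpa using hap)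
    simp
  set y := p / q
  have hp : p = q * y := (mul_div_cancel₀ p hq.ne').symm
  have hy : y ∈ Icc a b := ⟨(le_div_iff₀ hq).2 hap, (div_le_iff₀ hq).2 hpb⟩
  have hchord := (convexOn_pow (k + 1)).sub_mul_le_of_mem_Icc ha (ha.trans (hy.1.trans hy.2)) hy
  rw [hp]
  calc (b - a) * (q * y * y ^ k) = q * ((b - a) * y ^ (k + 1)) := by ring
    _ ≤ q * ((b - y) * a ^ (k + 1) + (y - a) * b ^ (k + 1)) := by gcongr
    _ = _ := by ring

theorem mul_tsum_mul_div_pow_le_chord {ι : Type*} {p q : ι → ℝ} {a b : ℝ} (ha : 0 ≤ a)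
    (hab : a < b) (hp : HasSum p 1) (hq : HasSum q 1) (hq0 : ∀ i, 0 ≤ q i)
    (hap : ∀ i, a * q i ≤ p i) (hpb : ∀ i, p i ≤ b * q i) (k : ℕ) :
    (b - a) * ∑' i, p i * (p i / q i) ^ k ≤ (b - 1) * a ^ (k + 1) + (1 - a) * b ^ (k + 1) := by
  have hchord := fun i => mul_div_pow_le_chord ha (hq0 i) (hap i) (hpb i) k
  have hsum := (((hq.mul_left b).sub hp).mul_right (a ^ (k + 1))).add
    ((hp.sub (hq.mul_left a)).mul_right (b ^ (k + 1)))
  rw [mul_one, mul_one] at hsum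
  have hnonneg (i : ι) : 0 ≤ (b - a) * (p i * (p i / q i) ^ k) := by
    have hpi := (mul_nonneg ha (hq0 i)).trans (hap i)
    exact mul_nonneg (sub_nonneg.2 hab.le) (mul_nonneg hpi (pow_nonneg (div_nonneg hpi (hq0 i)) k))
  rw [← tsum_mul_left]
  exact hasSum_le hchord (Summable.of_nonneg_of_le hnonneg hchord hsum.summable).hasSum hsum

theorem tsum_mul_div_pow_le_exp {ι : Type*} {p q : ι → ℝ} {ε : ℝ} (hε : 0 ≤ ε)
    (hp : HasSum p 1) (hq : HasSum q 1) (hq0 : ∀ i, 0 ≤ q i)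
    (hpq : ∀ i, p i ≤ exp ε * q i) (hqp : ∀ i, q i ≤ exp ε * p i) (k : ℕ) :
    ∑' i, p i * (p i / q i) ^ k ≤ exp (ε ^ 2 * k * (k + 1) / 2) := by
  rcases hε.eq_or_lt with rfl | hε
  · have hterm (i : ι) : p i * (p i / q i) ^ k = p i := by
      have hpq : p i = q i := le_antisymm (by simpa using hpq i) (by simpa using hqp i)
      rw [← hpq]
      rcases eq_or_ne (p i) 0 with h | h
      · simp [h]
      · rw [div_self h, one_pow, mul_one]
    simp [tsum_congr hterm, hp.tsum_eq]
  have hap (i : ι) : exp (-ε) * q i ≤ p i := by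
    calc exp (-ε) * q i ≤ exp (-ε) * (exp ε * p i) := by gcongr; exact hqp i
      _ = p i := by rw [← mul_assoc, ← exp_add, neg_add_cancel, exp_zero, one_mul]
  have hab : exp (-ε) < exp ε := exp_lt_exp.2 (neg_lt_self hε)
  exact le_of_mul_le_mul_left
    ((mul_tsum_mul_div_pow_le_chord (exp_nonneg _) hab hp hq hq0 hap hpq k).trans
      (exp_chord_le hε.le k)) (sub_pos.2 hab)

theorem ENNReal.toReal_le_of_le_ofReal_mul {a b : ENNReal} {c : ℝ} (hc : 0 ≤ c)
    (hb : b ≠ ⊤) (h : a ≤ ENNReal.ofReal c * b) : a.toReal ≤ c * b.toReal := by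
  rw [← ENNReal.ofReal_toReal hb, ← ENNReal.ofReal_mul hc] at h
  exact ENNReal.toReal_le_of_le_ofReal (mul_nonneg hc ENNReal.toReal_nonneg) h

theorem PMF.hasSum_toReal {α : Type*} (p : PMF α) : HasSum (fun a => (p a).toReal) 1 := by
  have h := ENNReal.hasSum_toReal p.tsum_coe_ne_top
  rwa [← ENNReal.tsum_toReal_eq p.apply_ne_top, p.tsum_coe, ENNReal.toReal_one] at h

/-- If `M` satisfies `(2γ, 0)`-differential privacy (in both directions between
neighbors `d` and `d'`), then for every integer `l ≥ 0` the `l`-th log-moment of the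
privacy loss satisfies `α(l; d, d') ≤ 2γ² l(l+1)`. -/
theorem moment_bound_from_pure_dp
    {R : Type*} (γ : ℝ) (hγ : 0 ≤ γ) (P Q : PMF R)
    (hdp : ∀ o : R, P o ≤ ENNReal.ofReal (Real.exp (2 * γ)) * Q o)
    (hdp' : ∀ o : R, Q o ≤ ENNReal.ofReal (Real.exp (2 * γ)) * P o)
    (l : ℕ) :
    Real.log (∑' o : R, (P o).toReal * ((P o).toReal / (Q o).toReal) ^ (l : ℝ)) ≤
      2 * γ ^ 2 * l * (l + 1) := by
  simp_rw [rpow_natCast]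
  set S := ∑' o, (P o).toReal * ((P o).toReal / (Q o).toReal) ^ l
  have hmoment : S ≤ exp (2 * γ ^ 2 * l * (l + 1)) := by
    have := tsum_mul_div_pow_le_exp (by positivity) P.hasSum_toReal Q.hasSum_toReal
      (fun _ => ENNReal.toReal_nonneg)
      (fun o => ENNReal.toReal_le_of_le_ofReal_mul (exp_nonneg _) (Q.apply_ne_top o) (hdp o))
      (fun o => ENNReal.toReal_le_of_le_ofReal_mul (exp_nonneg _) (P.apply_ne_top o) (hdp' o)) l
    rwa [show (2 * γ) ^ 2 * l * (l + 1) / 2 = 2 * γ ^ 2 * l * (l + 1) by ring] at this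
  have hS : 0 ≤ S := tsum_nonneg fun o => by positivity
  rcases hS.eq_or_lt with hS | hS
  · rw [← hS, log_zero]
    positivity
  · exact (log_le_iff_le_exp hS).2 hmoment
end

section
/- If a random variable C satisfies |C| ≤ ε almost surely and E[e^C] ≤ 1 (as holds for a privacy loss random variable), then log E[exp(lC)] ≤ l(l+1)ε²/2 for all l ≥ 0. -/
/-!
By Hoeffding's lemma, `C - E[C]` is sub-Gaussian with variance proxy `ε²`, so
`log E[exp (l C)] ≤ l E[C] + l² ε² / 2`. Integrating `1 + C ≤ exp C` against `E[exp C] ≤ 1`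
gives `E[C] ≤ 0`, and `l² ≤ l (l + 1)` for `l ≥ 0`.
-/

open MeasureTheory ProbabilityTheory Real

section

variable {Ω : Type*} {m : MeasurableSpace Ω} {μ : Measure Ω} [IsProbabilityMeasure μ] {X : Ω → ℝ}

theorem integral_nonpos_of_integral_exp_le_one (hX : Integrable X μ)
    (hexpX : Integrable (fun ω ↦ exp (X ω)) μ) (h : ∫ ω, exp (X ω) ∂μ ≤ 1) :
    μ[X] ≤ 0 := by
  have h_one_add : ∫ ω, (1 + X ω) ∂μ ≤ ∫ ω, exp (X ω) ∂μ :=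
    integral_mono ((integrable_const 1).add hX) hexpX fun ω ↦ by
      linarith [add_one_le_exp (X ω)]
  rw [integral_add (integrable_const 1) hX, integral_const, probReal_univ, one_smul] at h_one_add
  linarith

theorem cgf_le_of_mem_Icc {a b : ℝ} (hm : AEMeasurable X μ) (hb : ∀ᵐ ω ∂μ, X ω ∈ Set.Icc a b)
    (t : ℝ) : cgf X μ t ≤ t * μ[X] + ((b - a) / 2) ^ 2 * t ^ 2 / 2 := by
  have h_centred := hasSubgaussianMGF_of_mem_Icc hm hb
  have h_shift : mgf X μ t = mgf (fun ω ↦ X ω - μ[X]) μ t * exp (t * μ[X]) := by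
    rw [← mgf_add_const]
    simp
  have h_proxy : (((‖b - a‖₊ / 2) ^ 2 : NNReal) : ℝ) = ((b - a) / 2) ^ 2 := by
    simp [div_pow, sq_abs]
  calc cgf X μ t = cgf (fun ω ↦ X ω - μ[X]) μ t + t * μ[X] := by
        rw [cgf, cgf, h_shift, log_mul (mgf_pos (h_centred.integrable_exp_mul t)).ne'
          (exp_pos _).ne', log_exp]
    _ ≤ ((b - a) / 2) ^ 2 * t ^ 2 / 2 + t * μ[X] := by
        rw [← h_proxy]
        gcongr
        exact h_centred.cgf_le t
    _ = t * μ[X] + ((b - a) / 2) ^ 2 * t ^ 2 / 2 := add_comm _ _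

end

theorem bounded_loss_moment_bound_general
    {Ω : Type*} [MeasureSpace Ω] [IsProbabilityMeasure (ℙ : Measure Ω)]
    (C : Ω → ℝ) (hC : Measurable C) (ε : ℝ)
    (hbound : ∀ᵐ ω ∂(volume : Measure Ω), |C ω| ≤ ε)
    (hexp : (∫ ω, Real.exp (C ω) ∂(volume : Measure Ω)) ≤ 1)
    (l : ℝ) (hl : 0 ≤ l) :
    Real.log (∫ ω, Real.exp (l * C ω) ∂(volume : Measure Ω)) ≤ l * (l + 1) * ε ^ 2 / 2 := by
  have hIcc : ∀ᵐ ω, C ω ∈ Set.Icc (-ε) ε := by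
    filter_upwards [hbound] with ω h using abs_le.mp h
  have hmean : ∫ ω, C ω ≤ 0 := by
    refine integral_nonpos_of_integral_exp_le_one
      (Integrable.of_mem_Icc _ _ hC.aemeasurable hIcc) ?_ hexp
    simpa using integrable_exp_mul_of_mem_Icc (t := 1) hC.aemeasurable hIcc
  calc Real.log (∫ ω, Real.exp (l * C ω)) = cgf C volume l := rfl
    _ ≤ l * (∫ ω, C ω) + ((ε - -ε) / 2) ^ 2 * l ^ 2 / 2 :=
        cgf_le_of_mem_Icc hC.aemeasurable hIcc l
    _ ≤ l * (l + 1) * ε ^ 2 / 2 := by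
      nlinarith [mul_nonpos_of_nonneg_of_nonpos hl hmean, mul_nonneg hl (sq_nonneg ε)]

/-- If `|C| ≤ ε` almost surely and `E[e^C] ≤ 1`, then
`log E[exp(l C)] ≤ l(l+1)ε²/2` for all `l ≥ 0`. -/
theorem bounded_loss_moment_bound
    {Ω : Type*} [MeasureSpace Ω] [IsProbabilityMeasure (ℙ : Measure Ω)]
    (C : Ω → ℝ) (hC : Measurable C) (ε : ℝ) (hε : 0 < ε)
    (hbound : ∀ᵐ ω ∂(volume : Measure Ω), |C ω| ≤ ε)
    (hexp : (∫ ω, Real.exp (C ω) ∂(volume : Measure Ω)) ≤ 1)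
    (l : ℝ) (hl : 0 ≤ l) :
    Real.log (∫ ω, Real.exp (l * C ω) ∂(volume : Measure Ω)) ≤ l * (l + 1) * ε ^ 2 / 2 :=
  bounded_loss_moment_bound_general C hC ε hbound hexp l hl
end
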